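/- Fix n ≥ 2, and for 0 ≤ j ≤ n−2 define ê_j ∈ P_n by ê_j = γ^{-1} Σ μ_v(g) μ_v(h) ((p,h,h,q) ; (p,g,g,q)), the sum being over all j-paths p with end vertex v, all pairs of edges g, h incident to v, and all (n−j−2)-tuples q of edges such that (p,g,g,q) is an n-path (equivalently, such that (p,h,h,q) is an n-path). Then the ê_j satisfy the Temperley–Lieb relations with parameter γ: ê_j² = ê_j for all j; ê_i ê_j = ê_j ê_i whenever |i − j| ≥ 2; and ê_j ê_{j±1} ê_j = γ^{-2} ê_j whenever both indices lie in {0,…,n−2}. -/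
import Mathlib


open scoped Classical

noncomputable section

variable {Γa Γb E : Type*}

/-- The condition for `(base, p)` to be a `k`-path based in `Γa` in the bipartite graph with
source map `s : E → Γa` and target map `t : E → Γb`: the path starts at `base`, and the edges
are traversed alternately forwards and backwards, i.e. `t (p (2i-1)) = t (p (2i))` and
`s (p (2i)) = s (p (2i+1))` (with 1-based indexing). -/
def IsPath (s : E → Γa) (t : E → Γb) (k : ℕ) (base : Γa) (p : Fin k → E) : Prop :=
  (∀ h : 0 < k, s (p ⟨0, h⟩) = base) ∧
    ∀ (j : Fin k) (hj : (j : ℕ) + 1 < k),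
      if Even (j : ℕ) then t (p j) = t (p ⟨(j : ℕ) + 1, hj⟩)
      else s (p j) = s (p ⟨(j : ℕ) + 1, hj⟩)

/-- A `k`-path based in `Γa`: a base vertex together with an alternating edge sequence. -/
def GPath (s : E → Γa) (t : E → Γb) (k : ℕ) :=
  { bp : Γa × (Fin k → E) // IsPath s t k bp.1 bp.2 }

namespace GPath

variable {s : E → Γa} {t : E → Γb} {k : ℕ}

/-- The start vertex of a path. -/
def base (p : GPath s t k) : Γa := p.1.1

/-- The edge sequence of a path. -/
def edges (p : GPath s t k) : Fin k → E := p.1.2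

/-- The end vertex of a path: the vertex reached after the `k` steps. -/
def endV (p : GPath s t k) : Γa ⊕ Γb :=
  if h : 0 < k then
    if Even k then Sum.inl (s (p.edges ⟨k - 1, Nat.sub_lt h one_pos⟩))
    else Sum.inr (t (p.edges ⟨k - 1, Nat.sub_lt h one_pos⟩))
  else Sum.inl p.base

end GPath

/-- A `2k`-loop based in `Γa`, encoded as a pair `(f; e)` of `k`-paths with the same start
and the same end. -/
def Loop (s : E → Γa) (t : E → Γb) (k : ℕ) :=
  { fe : GPath s t k × GPath s t k // fe.1.base = fe.2.base ∧ fe.1.endV = fe.2.endV }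

namespace Loop

variable {s : E → Γa} {t : E → Γb} {k : ℕ}

/-- The first path `f` of the loop `(f; e)`. -/
def f (l : Loop s t k) : GPath s t k := l.1.1

/-- The second path `e` of the loop `(f; e)`. -/
def e (l : Loop s t k) : GPath s t k := l.1.2

end Loop

variable [Fintype Γa] [Fintype Γb] [Fintype E]

instance instFintypeGPath {s : E → Γa} {t : E → Γb} {k : ℕ} : Fintype (GPath s t k) :=
  Subtype.fintype _

instance instFintypeLoop {s : E → Γa} {t : E → Γb} {k : ℕ} : Fintype (Loop s t k) :=
  Subtype.fintype _

/-- The loop multiplication on `P_k = (Loop s t k → ℂ)`, determined on basis loops by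
`(f; e) · (h; g) = δ_{f,g} (h; e)`. -/
def lmul {s : E → Γa} {t : E → Γb} {k : ℕ} (x y : Loop s t k → ℂ) : Loop s t k → ℂ :=
  fun l => ∑ l₁ : Loop s t k, ∑ l₂ : Loop s t k,
    if l₁.f = l₂.e ∧ l₁.e = l.e ∧ l₂.f = l.f then x l₁ * y l₂ else 0

/-- The unit of `P_k`: the sum of `(p; p)` over all `k`-paths `p`. -/
def lone {s : E → Γa} {t : E → Γb} {k : ℕ} : Loop s t k → ℂ :=
  fun l => if l.f = l.e then 1 else 0

/-- `L` is obtained from the loop `l = (f; e)` by appending the same edge `g` to both `f`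
and `e`. -/
def ExtendsBy {s : E → Γa} {t : E → Γb} {k : ℕ} (l : Loop s t k) (L : Loop s t (k + 1)) :
    Prop :=
  ∃ g : E, L.f.1 = (l.f.base, Fin.snoc l.f.edges g) ∧ L.e.1 = (l.e.base, Fin.snoc l.e.edges g)

/-- The inclusion `I_k : P_k → P_{k+1}`, determined on basis loops by
`I_k (f; e) = ∑_g (f,g; e,g)`, the sum being over the edges `g` incident to the common end
vertex of `f` and `e`. -/
def incl {s : E → Γa} {t : E → Γb} {k : ℕ} (x : Loop s t k → ℂ) : Loop s t (k + 1) → ℂ :=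
  fun L => ∑ l : Loop s t k, if ExtendsBy l L then x l else 0


/-- `μ_v(g) = √(η(w)/η(v))`, where `w` is the endpoint of the edge `g` other than `v`. -/
def mu (s : E → Γa) (t : E → Γb) (η : Γa ⊕ Γb → ℝ) (v : Γa ⊕ Γb) (g : E) : ℝ :=
  match v with
  | Sum.inl va => Real.sqrt (η (Sum.inr (t g)) / η (Sum.inl va))
  | Sum.inr vb => Real.sqrt (η (Sum.inl (s g)) / η (Sum.inr vb))

/-- The vertex to which an edge placed at (0-based) position `j` of a path is attached:
a vertex of `Γa` if `j` is even, a vertex of `Γb` if `j` is odd. -/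
def attachV (s : E → Γa) (t : E → Γb) (j : ℕ) (g : E) : Γa ⊕ Γb :=
  if Even j then Sum.inl (s g) else Sum.inr (t g)

/-- The image `ê_j ∈ P_n` of the Jones projection element under the iterated inclusions:
`ê_j = γ⁻¹ ∑ μ_v(g) μ_v(h) ((p,h,h,q); (p,g,g,q))`, the sum being over all `j`-paths `p`
with end vertex `v`, all pairs of edges `g, h` incident to `v`, and all tails `q` making the
displayed sequences `n`-paths.  On coefficients: the basis loops involved are exactly those
whose two edge sequences agree outside positions `j, j+1` and are doubled there. -/
def ehat (s : E → Γa) (t : E → Γb) (γ : ℝ) (η : Γa ⊕ Γb → ℝ) (n j : ℕ) (hj : j + 2 ≤ n) :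
    Loop s t n → ℂ :=
  fun L =>
    if (∀ i : Fin n, (i : ℕ) ≠ j → (i : ℕ) ≠ j + 1 → L.f.edges i = L.e.edges i)
        ∧ L.f.edges ⟨j, by omega⟩ = L.f.edges ⟨j + 1, by omega⟩
        ∧ L.e.edges ⟨j, by omega⟩ = L.e.edges ⟨j + 1, by omega⟩ then
      ((γ⁻¹ * mu s t η (attachV s t j (L.e.edges ⟨j, by omega⟩)) (L.e.edges ⟨j, by omega⟩)
          * mu s t η (attachV s t j (L.f.edges ⟨j, by omega⟩)) (L.f.edges ⟨j, by omega⟩) : ℝ)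
        : ℂ)
    else 0


section Aux

variable {Γa Γb E : Type*} {s : E → Γa} {t : E → Γb}

lemma attachV_congr {j k : ℕ} (h : Even j ↔ Even k) (g : E) :
    attachV s t j g = attachV s t k g := by
  unfold attachV
  by_cases hj : Even j
  · rw [if_pos hj, if_pos (h.mp hj)]
  · rw [if_neg hj, if_neg (fun hk => hj (h.mpr hk))]

lemma even_iff_even {j k : ℕ} (h : j % 2 = k % 2) : Even j ↔ Even k := by
  constructor <;> intro hx <;> [skip; skip] <;>
    · rcases hx with ⟨m, hm⟩
      refine Nat.even_iff.mpr ?_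
      omega

lemma isPath_iff {k : ℕ} (base : Γa) (q : Fin k → E) :
    IsPath s t k base q ↔
      ((∀ h : 0 < k, attachV s t 0 (q ⟨0, h⟩) = Sum.inl base) ∧
        ∀ (i : ℕ) (hi : i + 1 < k),
          attachV s t (i+1) (q ⟨i, by omega⟩) = attachV s t (i+1) (q ⟨i+1, hi⟩)) := by
  unfold IsPath
  constructor
  · rintro ⟨h0, hstep⟩
    refine ⟨fun h => by simp [attachV, h0 h], fun i hi => ?_⟩
    have h := hstep ⟨i, by omega⟩ hi
    simp only [Fin.val_mk] at h
    by_cases he : Even i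
    · rw [if_pos he] at h
      simp [attachV, Nat.even_add_one, he, h]
    · rw [if_neg he] at h
      simp [attachV, Nat.even_add_one, he, h]
  · rintro ⟨h0, hstep⟩
    refine ⟨fun h => ?_, fun j hj => ?_⟩
    · have := h0 h
      simpa [attachV] using this
    · have h := hstep (j : ℕ) hj
      simp only [attachV, Fin.eta] at h
      by_cases he : Even (j : ℕ)
      · rw [if_pos he]
        rw [if_neg (by simp [Nat.even_add_one, he]),
          if_neg (by simp [Nat.even_add_one, he])] at h
        simpa using h
      · rw [if_neg he]
        rw [if_pos (by simp [Nat.even_add_one, he]),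
          if_pos (by simp [Nat.even_add_one, he])] at h
        simpa using h

namespace GPath

lemma cond {n : ℕ} (p : GPath s t n) (i : ℕ) (hi : i + 1 < n) :
    attachV s t (i+1) (p.edges ⟨i, by omega⟩) = attachV s t (i+1) (p.edges ⟨i+1, hi⟩) :=
  ((isPath_iff p.1.1 p.1.2).mp p.2).2 i hi

lemma attach_base {n : ℕ} (p : GPath s t n) (h : 0 < n) :
    attachV s t 0 (p.edges ⟨0, h⟩) = Sum.inl p.base :=
  ((isPath_iff p.1.1 p.1.2).mp p.2).1 h

lemma endV_eq {n : ℕ} (p : GPath s t n) (h : 0 < n) :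
    p.endV = attachV s t n (p.edges ⟨n - 1, by omega⟩) := by
  unfold endV attachV
  rw [dif_pos h]

lemma ext' {k : ℕ} {p q : GPath s t k} (hb : p.base = q.base) (he : p.edges = q.edges) :
    p = q := by
  apply Subtype.ext
  exact Prod.ext hb he

/-- attach vertex two positions later, across a doubled pair. -/
lemma attach_dbl {n : ℕ} (p : GPath s t n) (j : ℕ) (h2 : j + 2 < n)
    (hd : p.edges ⟨j, by omega⟩ = p.edges ⟨j+1, by omega⟩) :
    attachV s t j (p.edges ⟨j+2, h2⟩) = attachV s t j (p.edges ⟨j, by omega⟩) := by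
  have h := p.cond (j+1) h2
  rw [hd]
  calc attachV s t j (p.edges ⟨j+2, h2⟩)
      = attachV s t (j+2) (p.edges ⟨j+2, h2⟩) := attachV_congr (by simp [Nat.even_add_one]) _
    _ = attachV s t (j+2) (p.edges ⟨j+1, by omega⟩) := h.symm
    _ = attachV s t j (p.edges ⟨j+1, by omega⟩) := attachV_congr (by simp [Nat.even_add_one]) _

/-- attach vertices of two paths at a common position agree, given same base and
common previous edge. -/
lemma attach_eq {n : ℕ} (p q : GPath s t n) (a : ℕ) (ha : a < n)
    (hbase : p.base = q.base)
    (hprev : ∀ h : 1 ≤ a, p.edges ⟨a-1, by omega⟩ = q.edges ⟨a-1, by omega⟩) :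
    attachV s t a (p.edges ⟨a, ha⟩) = attachV s t a (q.edges ⟨a, ha⟩) := by
  rcases a with _ | b
  · rw [p.attach_base (by omega), q.attach_base (by omega), hbase]
  · have hp := p.cond b ha
    have hq := q.cond b ha
    have hpr := hprev (by omega)
    rw [← hp, ← hq]
    exact congrArg _ hpr

end GPath

/-- replace the two edges in window `{j, j+1}` by `g`. -/
def updWin {n : ℕ} (j : ℕ) (g : E) (q : Fin n → E) : Fin n → E :=
  fun i => if (i : ℕ) = j ∨ (i : ℕ) = j + 1 then g else q i

lemma updWin_mem {n : ℕ} (j : ℕ) (g : E) (q : Fin n → E) (i : Fin n)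
    (h : (i : ℕ) = j ∨ (i : ℕ) = j + 1) : updWin j g q i = g := if_pos h

lemma updWin_notMem {n : ℕ} (j : ℕ) (g : E) (q : Fin n → E) (i : Fin n)
    (h : ¬((i : ℕ) = j ∨ (i : ℕ) = j + 1)) : updWin j g q i = q i := if_neg h

/-- The path obtained from `p` by replacing the doubled pair at `{j, j+1}` by the doubled
edge `g`, where `g` attaches at the same vertex. -/
def GPath.upd {n : ℕ} (p : GPath s t n) (j : ℕ) (hj : j + 2 ≤ n) (g : E)
    (hd : p.edges ⟨j, by omega⟩ = p.edges ⟨j+1, by omega⟩)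
    (hg : attachV s t j g = attachV s t j (p.edges ⟨j, by omega⟩)) : GPath s t n := by
  refine ⟨(p.base, updWin j g p.edges), (isPath_iff _ _).mpr ⟨?_, ?_⟩⟩
  · intro h0
    dsimp only
    by_cases h : j = 0
    · subst h
      rw [updWin_mem 0 g p.edges ⟨0, h0⟩ (Or.inl rfl), hg]
      exact p.attach_base h0
    · rw [updWin_notMem j g p.edges ⟨0, h0⟩ (show ¬((0:ℕ) = j ∨ (0:ℕ) = j+1) by omega)]
      exact p.attach_base h0
  · intro i hi
    dsimp only
    by_cases h1 : i = j
    · subst h1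
      rw [updWin_mem i g p.edges ⟨i, by omega⟩ (Or.inl rfl),
        updWin_mem i g p.edges ⟨i+1, hi⟩ (Or.inr rfl)]
    · by_cases h2 : i + 1 = j
      · rw [updWin_notMem j g p.edges ⟨i, by omega⟩ (show ¬(i = j ∨ i = j+1) by omega),
          updWin_mem j g p.edges ⟨i+1, hi⟩ (show i+1 = j ∨ i+1 = j+1 from Or.inl h2)]
        have hc := p.cond i hi
        rw [hc]
        subst h2
        rw [hg]
      · by_cases h3 : i = j + 1
        · rw [updWin_mem j g p.edges ⟨i, by omega⟩ (show i = j ∨ i = j+1 from Or.inr h3),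
            updWin_notMem j g p.edges ⟨i+1, hi⟩ (show ¬(i+1 = j ∨ i+1 = j+1) by omega)]
          have h4 : i + 1 = j + 2 := by omega
          have key : attachV s t j g = attachV s t j (p.edges ⟨i+1, hi⟩) := by
            rw [hg]
            have hdd := p.attach_dbl j (show j + 2 < n by omega) hd
            rw [show (⟨i+1, hi⟩ : Fin n) = ⟨j+2, by omega⟩ from Fin.mk_eq_mk.mpr h4, hdd]
          calc attachV s t (i+1) g = attachV s t j g :=
                attachV_congr (even_iff_even (by omega)) _
            _ = attachV s t j (p.edges ⟨i+1, hi⟩) := key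
            _ = attachV s t (i+1) (p.edges ⟨i+1, hi⟩) :=
                attachV_congr (even_iff_even (by omega)) _
        · rw [updWin_notMem j g p.edges ⟨i, by omega⟩ (show ¬(i = j ∨ i = j+1) by omega),
            updWin_notMem j g p.edges ⟨i+1, hi⟩ (show ¬(i+1 = j ∨ i+1 = j+1) by omega)]
          exact p.cond i hi

@[simp] lemma GPath.upd_base {n : ℕ} (p : GPath s t n) (j : ℕ) (hj : j + 2 ≤ n) (g : E)
    (hd : p.edges ⟨j, by omega⟩ = p.edges ⟨j+1, by omega⟩)
    (hg : attachV s t j g = attachV s t j (p.edges ⟨j, by omega⟩)) :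
    (p.upd j hj g hd hg).base = p.base := rfl

@[simp] lemma GPath.upd_edges {n : ℕ} (p : GPath s t n) (j : ℕ) (hj : j + 2 ≤ n) (g : E)
    (hd : p.edges ⟨j, by omega⟩ = p.edges ⟨j+1, by omega⟩)
    (hg : attachV s t j g = attachV s t j (p.edges ⟨j, by omega⟩)) :
    (p.upd j hj g hd hg).edges = updWin j g p.edges := rfl

lemma GPath.upd_endV {n : ℕ} (p : GPath s t n) (j : ℕ) (hj : j + 2 ≤ n) (g : E)
    (hd : p.edges ⟨j, by omega⟩ = p.edges ⟨j+1, by omega⟩)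
    (hg : attachV s t j g = attachV s t j (p.edges ⟨j, by omega⟩)) :
    (p.upd j hj g hd hg).endV = p.endV := by
  rw [GPath.endV_eq _ (by omega), GPath.endV_eq p (by omega)]
  show attachV s t n (updWin j g p.edges ⟨n-1, by omega⟩) = _
  by_cases h : n - 1 = j + 1
  · rw [updWin_mem j g p.edges ⟨n-1, by omega⟩ (show n-1 = j ∨ n-1 = j+1 from Or.inr h)]
    calc attachV s t n g = attachV s t j g := attachV_congr (even_iff_even (by omega)) _
      _ = attachV s t j (p.edges ⟨j, by omega⟩) := hg
      _ = attachV s t j (p.edges ⟨j+1, by omega⟩) := by rw [hd]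
      _ = attachV s t n (p.edges ⟨j+1, by omega⟩) :=
          attachV_congr (even_iff_even (by omega)) _
      _ = attachV s t n (p.edges ⟨n-1, by omega⟩) :=
          congrArg _ (congrArg p.edges (Fin.mk_eq_mk.mpr h.symm))
  · rw [updWin_notMem j g p.edges ⟨n-1, by omega⟩ (show ¬(n-1 = j ∨ n-1 = j+1) by omega)]

section MatFrame

variable [Fintype Γa] [Fintype Γb] [Fintype E] {k n : ℕ}

/-- Encode an element of `P_k` as a matrix indexed by `k`-paths. -/
def toMat (x : Loop s t k → ℂ) : Matrix (GPath s t k) (GPath s t k) ℂ :=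
  fun f e => if h : f.base = e.base ∧ f.endV = e.endV then x ⟨(f, e), h⟩ else 0

lemma toMat_apply_loop (x : Loop s t k → ℂ) (l : Loop s t k) :
    toMat x l.f l.e = x l := by
  obtain ⟨⟨f, e⟩, hl⟩ := l
  exact dif_pos hl

lemma toMat_inj {x y : Loop s t k → ℂ} (h : toMat x = toMat y) : x = y := by
  funext l
  rw [← toMat_apply_loop x l, ← toMat_apply_loop y l, h]

lemma toMat_smul (c : ℂ) (x : Loop s t k → ℂ) : toMat (c • x) = c • toMat x := by
  funext f e
  rw [Matrix.smul_apply]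
  unfold toMat
  by_cases h : f.base = e.base ∧ f.endV = e.endV
  · rw [dif_pos h, dif_pos h]; rfl
  · rw [dif_neg h, dif_neg h]; simp

lemma sum_loop (a b : GPath s t k) (F : Loop s t k → ℂ) :
    (∑ l : Loop s t k, if l.f = a ∧ l.e = b then F l else 0) =
      if h : a.base = b.base ∧ a.endV = b.endV then F ⟨(a, b), h⟩ else 0 := by
  by_cases h : a.base = b.base ∧ a.endV = b.endV
  · rw [dif_pos h]
    have h1 : ∀ l ∈ (Finset.univ : Finset (Loop s t k)), l ≠ ⟨(a, b), h⟩ →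
        (if l.f = a ∧ l.e = b then F l else 0) = 0 := by
      intro l _ hne
      rw [if_neg]
      rintro ⟨h1, h2⟩
      exact hne (Subtype.ext (Prod.ext h1 h2))
    exact (Finset.sum_eq_single_of_mem _ (Finset.mem_univ _) h1).trans (if_pos ⟨rfl, rfl⟩)
  · rw [dif_neg h]
    apply Finset.sum_eq_zero
    intro l _
    rw [if_neg]
    rintro ⟨h1, h2⟩
    exact h (h1 ▸ h2 ▸ l.2)

lemma sum_loop_e (b : GPath s t k) (F : Loop s t k → ℂ) :
    (∑ l : Loop s t k, if l.e = b then F l else 0) =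
      ∑ m : GPath s t k,
        if h : m.base = b.base ∧ m.endV = b.endV then F ⟨(m, b), h⟩ else 0 := by
  have key : ∀ m : GPath s t k,
      (if h : m.base = b.base ∧ m.endV = b.endV then F ⟨(m, b), h⟩ else 0) =
        ∑ l : Loop s t k, if l.f = m ∧ l.e = b then F l else 0 :=
    fun m => (sum_loop m b F).symm
  rw [Finset.sum_congr rfl (fun m _ => key m), Finset.sum_comm]
  apply Finset.sum_congr rfl
  intro l _
  by_cases h : l.e = b
  · rw [if_pos h]
    have h1 : ∀ m ∈ (Finset.univ : Finset (GPath s t k)), m ≠ l.f →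
        (if l.f = m ∧ l.e = b then F l else 0) = 0 := by
      intro m _ hne
      rw [if_neg]
      rintro ⟨h1, _⟩
      exact hne h1.symm
    exact ((Finset.sum_eq_single_of_mem _ (Finset.mem_univ _) h1).trans (if_pos ⟨rfl, h⟩)).symm
  · rw [if_neg h]
    symm
    apply Finset.sum_eq_zero
    intro m _
    rw [if_neg]
    rintro ⟨_, h2⟩
    exact h h2

lemma toMat_lmul (x y : Loop s t k → ℂ) :
    toMat (lmul x y) = toMat y * toMat x := by
  funext f e
  show toMat (lmul x y) f e = ∑ m : GPath s t k, toMat y f m * toMat x m e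
  by_cases h : f.base = e.base ∧ f.endV = e.endV
  · have hL : toMat (lmul x y) f e = lmul x y ⟨(f, e), h⟩ := dif_pos h
    rw [hL]
    show (∑ l₁ : Loop s t k, ∑ l₂ : Loop s t k,
        if l₁.f = l₂.e ∧ l₁.e = e ∧ l₂.f = f then x l₁ * y l₂ else 0) = _
    have step1 : ∀ l₁ : Loop s t k,
        (∑ l₂ : Loop s t k, if l₁.f = l₂.e ∧ l₁.e = e ∧ l₂.f = f
            then x l₁ * y l₂ else 0) =
          (if l₁.e = e then
            (∑ l₂ : Loop s t k, if l₂.f = f ∧ l₂.e = l₁.f then x l₁ * y l₂ else 0)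
           else 0) := by
      intro l₁
      by_cases h1 : l₁.e = e
      · rw [if_pos h1]
        apply Finset.sum_congr rfl
        intro l₂ _
        congr 1
        simp only [eq_iff_iff]
        constructor
        · rintro ⟨ha, _, hc⟩; exact ⟨hc, ha.symm⟩
        · rintro ⟨hc, ha⟩; exact ⟨ha.symm, h1, hc⟩
      · rw [if_neg h1]
        apply Finset.sum_eq_zero
        intro l₂ _
        rw [if_neg]
        rintro ⟨_, hb, _⟩
        exact h1 hb
    rw [Finset.sum_congr rfl (fun l₁ _ => step1 l₁)]
    have step2 : ∀ l₁ : Loop s t k,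
        (if l₁.e = e then
            (∑ l₂ : Loop s t k, if l₂.f = f ∧ l₂.e = l₁.f then x l₁ * y l₂ else 0)
         else 0) =
          (if l₁.e = e then
            (if h2 : f.base = l₁.f.base ∧ f.endV = l₁.f.endV
              then x l₁ * y ⟨(f, l₁.f), h2⟩ else 0)
           else 0) := by
      intro l₁
      by_cases h1 : l₁.e = e
      · rw [if_pos h1, if_pos h1, sum_loop f l₁.f (fun l₂ => x l₁ * y l₂)]
      · rw [if_neg h1, if_neg h1]
    rw [Finset.sum_congr rfl (fun l₁ _ => step2 l₁)]
    rw [sum_loop_e e (fun l₁ => if h2 : f.base = l₁.f.base ∧ f.endV = l₁.f.endV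
      then x l₁ * y ⟨(f, l₁.f), h2⟩ else 0)]
    apply Finset.sum_congr rfl
    intro m _
    show (if hm : m.base = e.base ∧ m.endV = e.endV then
        (if h2 : f.base = m.base ∧ f.endV = m.endV
          then x ⟨(m, e), hm⟩ * y ⟨(f, m), h2⟩ else 0) else 0) = _
    unfold toMat
    by_cases hm : m.base = e.base ∧ m.endV = e.endV
    · by_cases h2 : f.base = m.base ∧ f.endV = m.endV
      · rw [dif_pos hm, dif_pos h2, dif_pos h2, dif_pos hm, mul_comm]
      · rw [dif_pos hm, dif_neg h2, dif_neg h2, zero_mul]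
    · rw [dif_neg hm, dif_neg hm, mul_zero]
  · rw [toMat, dif_neg h]
    symm
    apply Finset.sum_eq_zero
    intro m _
    unfold toMat
    by_cases h2 : f.base = m.base ∧ f.endV = m.endV
    · by_cases hm : m.base = e.base ∧ m.endV = e.endV
      · exact absurd ⟨h2.1.trans hm.1, h2.2.trans hm.2⟩ h
      · rw [dif_neg hm, mul_zero]
    · rw [dif_neg h2, zero_mul]

end MatFrame


section EmatSec

variable [Fintype Γa] [Fintype Γb] [Fintype E]

/-- `μ` of an edge at its attaching vertex for position `j`. -/
def muj (s : E → Γa) (t : E → Γb) (η : Γa ⊕ Γb → ℝ) (j : ℕ) (g : E) : ℝ :=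
  mu s t η (attachV s t j g) g

lemma muj_nonneg (η : Γa ⊕ Γb → ℝ) (j : ℕ) (g : E) : 0 ≤ muj s t η j g := by
  unfold muj
  generalize attachV s t j g = v
  cases v <;> exact Real.sqrt_nonneg _

lemma attachV_even (g : E) {j : ℕ} (h : Even j) : attachV s t j g = Sum.inl (s g) := by
  unfold attachV; rw [if_pos h]

lemma attachV_odd (g : E) {j : ℕ} (h : ¬Even j) : attachV s t j g = Sum.inr (t g) := by
  unfold attachV; rw [if_neg h]

lemma muj_sq (η : Γa ⊕ Γb → ℝ) (hη : ∀ x, 0 < η x) (j : ℕ) (g : E) :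
    (muj s t η j g)^2 = if Even j then η (Sum.inr (t g)) / η (Sum.inl (s g))
      else η (Sum.inl (s g)) / η (Sum.inr (t g)) := by
  unfold muj
  by_cases hEv : Even j
  · rw [if_pos hEv, attachV_even g hEv]
    show (Real.sqrt (η (Sum.inr (t g)) / η (Sum.inl (s g))))^2 = _
    rw [Real.sq_sqrt (div_nonneg (hη _).le (hη _).le)]
  · rw [if_neg hEv, attachV_odd g hEv]
    show (Real.sqrt (η (Sum.inl (s g)) / η (Sum.inr (t g))))^2 = _
    rw [Real.sq_sqrt (div_nonneg (hη _).le (hη _).le)]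

lemma muj_sq_adj (η : Γa ⊕ Γb → ℝ) (hη : ∀ x, 0 < η x) (j : ℕ) (g : E) :
    (muj s t η j g)^2 * (muj s t η (j+1) g)^2 = 1 := by
  rw [muj_sq η hη j g, muj_sq η hη (j+1) g]
  by_cases hEv : Even j
  · rw [if_pos hEv, if_neg (by simp [Nat.even_add_one, hEv])]
    rw [div_mul_div_comm, mul_comm (η (Sum.inl (s g))) (η (Sum.inr (t g)))]
    exact div_self (mul_pos (hη _) (hη _)).ne'
  · rw [if_neg hEv, if_pos (by simp [Nat.even_add_one, hEv])]
    rw [div_mul_div_comm, mul_comm (η (Sum.inl (s g))) (η (Sum.inr (t g)))]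
    exact div_self (mul_pos (hη _) (hη _)).ne' 

lemma sum_muj_sq (γ : ℝ) (η : Γa ⊕ Γb → ℝ) (hη : ∀ x, 0 < η x)
    (heig₁ : ∀ va : Γa,
      (∑ g : E, if s g = va then η (Sum.inr (t g)) else 0) = γ * η (Sum.inl va))
    (heig₂ : ∀ vb : Γb,
      (∑ g : E, if t g = vb then η (Sum.inl (s g)) else 0) = γ * η (Sum.inr vb))
    (j : ℕ) (g₀ : E) :
    (∑ g : E, if attachV s t j g = attachV s t j g₀ then (muj s t η j g)^2 else 0) = γ := by
  by_cases hEv : Even j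
  · have step : ∀ g : E, (if attachV s t j g = attachV s t j g₀ then (muj s t η j g)^2
        else 0) = (if s g = s g₀ then η (Sum.inr (t g)) else 0) / η (Sum.inl (s g₀)) := by
      intro g
      by_cases hc : s g = s g₀
      · rw [if_pos (by rw [attachV_even g hEv, attachV_even g₀ hEv, hc]), if_pos hc,
          muj_sq η hη j g, if_pos hEv, hc]
      · have hcc : ¬(attachV s t j g = attachV s t j g₀) := by
          rw [attachV_even g hEv, attachV_even g₀ hEv]
          exact fun hh => hc (Sum.inl.inj hh)
        rw [if_neg hcc, if_neg hc, zero_div]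
    rw [Finset.sum_congr rfl (fun g _ => step g), ← Finset.sum_div, heig₁ (s g₀),
      mul_div_assoc, div_self (ne_of_gt (hη _)), mul_one]
  · have step : ∀ g : E, (if attachV s t j g = attachV s t j g₀ then (muj s t η j g)^2
        else 0) = (if t g = t g₀ then η (Sum.inl (s g)) else 0) / η (Sum.inr (t g₀)) := by
      intro g
      by_cases hc : t g = t g₀
      · rw [if_pos (by rw [attachV_odd g hEv, attachV_odd g₀ hEv, hc]), if_pos hc,
          muj_sq η hη j g, if_neg hEv, hc]
      · have hcc : ¬(attachV s t j g = attachV s t j g₀) := by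
          rw [attachV_odd g hEv, attachV_odd g₀ hEv]
          exact fun hh => hc (Sum.inr.inj hh)
        rw [if_neg hcc, if_neg hc, zero_div]
    rw [Finset.sum_congr rfl (fun g _ => step g), ← Finset.sum_div, heig₂ (t g₀),
      mul_div_assoc, div_self (ne_of_gt (hη _)), mul_one]

/-- The support condition of `ê_j` as a relation on pairs of paths. -/
def dupAt (s : E → Γa) (t : E → Γb) {n : ℕ} (j : ℕ) (hj : j + 2 ≤ n)
    (f e : GPath s t n) : Prop :=
  f.base = e.base ∧ f.endV = e.endV ∧
    (∀ i : Fin n, (i : ℕ) ≠ j → (i : ℕ) ≠ j + 1 → f.edges i = e.edges i) ∧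
    f.edges ⟨j, by omega⟩ = f.edges ⟨j + 1, by omega⟩ ∧
    e.edges ⟨j, by omega⟩ = e.edges ⟨j + 1, by omega⟩

/-- The matrix of `ê_j`. -/
def Emat (s : E → Γa) (t : E → Γb) (γ : ℝ) (η : Γa ⊕ Γb → ℝ) {n : ℕ} (j : ℕ)
    (hj : j + 2 ≤ n) : Matrix (GPath s t n) (GPath s t n) ℂ :=
  fun f e => if dupAt s t j hj f e then
    ((γ⁻¹ * muj s t η j (e.edges ⟨j, by omega⟩) * muj s t η j (f.edges ⟨j, by omega⟩) : ℝ)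
      : ℂ) else 0

lemma toMat_ehat (γ : ℝ) (η : Γa ⊕ Γb → ℝ) {n : ℕ} (j : ℕ) (hj : j + 2 ≤ n) :
    toMat (ehat s t γ η n j hj) = Emat s t γ η j hj := by
  funext f e
  unfold toMat Emat dupAt
  by_cases h : f.base = e.base ∧ f.endV = e.endV
  · rw [dif_pos h]
    have hval : ehat s t γ η n j hj ⟨(f, e), h⟩ =
        if (∀ i : Fin n, (i : ℕ) ≠ j → (i : ℕ) ≠ j + 1 → f.edges i = e.edges i)
            ∧ f.edges ⟨j, by omega⟩ = f.edges ⟨j + 1, by omega⟩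
            ∧ e.edges ⟨j, by omega⟩ = e.edges ⟨j + 1, by omega⟩ then
          ((γ⁻¹ * muj s t η j (e.edges ⟨j, by omega⟩) * muj s t η j (f.edges ⟨j, by omega⟩)
            : ℝ) : ℂ) else 0 := rfl
    rw [hval]
    by_cases h2 : (∀ i : Fin n, (i : ℕ) ≠ j → (i : ℕ) ≠ j + 1 → f.edges i = e.edges i)
        ∧ f.edges ⟨j, by omega⟩ = f.edges ⟨j + 1, by omega⟩
        ∧ e.edges ⟨j, by omega⟩ = e.edges ⟨j + 1, by omega⟩
    · rw [if_pos h2, if_pos ⟨h.1, h.2, h2.1, h2.2.1, h2.2.2⟩]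
    · rw [if_neg h2, if_neg (fun hh => h2 ⟨hh.2.2.1, hh.2.2.2.1, hh.2.2.2.2⟩)]
  · rw [dif_neg h, if_neg (fun hh => h ⟨hh.1, hh.2.1⟩)]

lemma dupAt.attach_eq {n j : ℕ} {hj : j + 2 ≤ n} {f e : GPath s t n}
    (h : dupAt s t j hj f e) :
    attachV s t j (f.edges ⟨j, by omega⟩) = attachV s t j (e.edges ⟨j, by omega⟩) :=
  GPath.attach_eq f e j (by omega) h.1
    (fun h1 => h.2.2.1 ⟨j - 1, by omega⟩ (show j - 1 ≠ j by omega)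
      (show j - 1 ≠ j + 1 by omega))

lemma dupAt_trans {n j : ℕ} {hj : j + 2 ≤ n} {f m e : GPath s t n}
    (h1 : dupAt s t j hj f m) (h2 : dupAt s t j hj m e) : dupAt s t j hj f e :=
  ⟨h1.1.trans h2.1, h1.2.1.trans h2.2.1,
    fun i hi1 hi2 => (h1.2.2.1 i hi1 hi2).trans (h2.2.2.1 i hi1 hi2),
    h1.2.2.2.1, h2.2.2.2.2⟩

end EmatSec


section Relations

variable [Fintype Γa] [Fintype Γb] [Fintype E]
variable (γ : ℝ) (η : Γa ⊕ Γb → ℝ)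

lemma Emat_entry_pos {n : ℕ} (j : ℕ) (hj : j + 2 ≤ n) {f e : GPath s t n}
    (h : dupAt s t j hj f e) : Emat s t γ η j hj f e =
      ((γ⁻¹ * muj s t η j (e.edges ⟨j, by omega⟩) * muj s t η j (f.edges ⟨j, by omega⟩) : ℝ)
        : ℂ) := if_pos h

lemma Emat_entry_neg {n : ℕ} (j : ℕ) (hj : j + 2 ≤ n) {f e : GPath s t n}
    (h : ¬dupAt s t j hj f e) : Emat s t γ η j hj f e = 0 := if_neg h

lemma Emat_mul_self (hγ : 0 < γ) (hη : ∀ x, 0 < η x)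
    (heig₁ : ∀ va : Γa,
      (∑ g : E, if s g = va then η (Sum.inr (t g)) else 0) = γ * η (Sum.inl va))
    (heig₂ : ∀ vb : Γb,
      (∑ g : E, if t g = vb then η (Sum.inl (s g)) else 0) = γ * η (Sum.inr vb))
    {n : ℕ} (j : ℕ) (hj : j + 2 ≤ n) :
    Emat s t γ η j hj * Emat s t γ η j hj = Emat s t γ η j hj := by
  funext f e
  rw [Matrix.mul_apply]
  by_cases hfe : dupAt s t j hj f e
  · have hdblf : f.edges ⟨j, by omega⟩ = f.edges ⟨j+1, by omega⟩ := hfe.2.2.2.1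
    have hdble : e.edges ⟨j, by omega⟩ = e.edges ⟨j+1, by omega⟩ := hfe.2.2.2.2
    have term : ∀ m : GPath s t n, Emat s t γ η j hj f m * Emat s t γ η j hj m e =
        if dupAt s t j hj f m ∧ dupAt s t j hj m e then
          ((((γ⁻¹ * muj s t η j (m.edges ⟨j, by omega⟩) * muj s t η j (f.edges ⟨j, by omega⟩))
            * (γ⁻¹ * muj s t η j (e.edges ⟨j, by omega⟩) * muj s t η j (m.edges ⟨j, by omega⟩)))
            : ℝ) : ℂ)
        else 0 := by
      intro m
      by_cases h1 : dupAt s t j hj f m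
      · by_cases h2 : dupAt s t j hj m e
        · rw [Emat_entry_pos γ η j hj h1, Emat_entry_pos γ η j hj h2, if_pos ⟨h1, h2⟩]
          push_cast
          ring
        · rw [Emat_entry_neg γ η j hj h2, if_neg (fun hh => h2 hh.2), mul_zero]
      · rw [Emat_entry_neg γ η j hj h1, if_neg (fun hh => h1 hh.1), zero_mul]
    rw [Finset.sum_congr rfl (fun m _ => term m), ← Finset.sum_filter]
    have hbij : (∑ m ∈ Finset.univ.filter
          (fun m : GPath s t n => dupAt s t j hj f m ∧ dupAt s t j hj m e),
          ((((γ⁻¹ * muj s t η j (m.edges ⟨j, by omega⟩) * muj s t η j (f.edges ⟨j, by omega⟩))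
            * (γ⁻¹ * muj s t η j (e.edges ⟨j, by omega⟩) * muj s t η j (m.edges ⟨j, by omega⟩)))
            : ℝ) : ℂ))
        = ∑ g ∈ Finset.univ.filter
            (fun g : E => attachV s t j g = attachV s t j (f.edges ⟨j, by omega⟩)),
          ((((γ⁻¹ * muj s t η j g * muj s t η j (f.edges ⟨j, by omega⟩))
            * (γ⁻¹ * muj s t η j (e.edges ⟨j, by omega⟩) * muj s t η j g)) : ℝ) : ℂ) := by
      refine Finset.sum_bij' (fun m _ => m.edges ⟨j, by omega⟩)
        (fun g hg => f.upd j hj g hdblf (Finset.mem_filter.mp hg).2) ?_ ?_ ?_ ?_ ?_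
      · intro m hm
        obtain ⟨h1, h2⟩ := (Finset.mem_filter.mp hm).2
        exact Finset.mem_filter.mpr ⟨Finset.mem_univ _, (dupAt.attach_eq h1).symm⟩
      · intro g hg
        have hgat := (Finset.mem_filter.mp hg).2
        refine Finset.mem_filter.mpr ⟨Finset.mem_univ _, ⟨?_, ?_⟩⟩
        · exact ⟨rfl, (f.upd_endV j hj g hdblf hgat).symm,
            fun i hi1 hi2 => (updWin_notMem j g f.edges i (by omega)).symm,
            hdblf, by
              rw [GPath.upd_edges, updWin_mem j g f.edges ⟨j, by omega⟩ (Or.inl rfl),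
                updWin_mem j g f.edges ⟨j+1, by omega⟩ (Or.inr rfl)]⟩
        · exact ⟨hfe.1, (f.upd_endV j hj g hdblf hgat).trans hfe.2.1,
            fun i hi1 hi2 => (updWin_notMem j g f.edges i (by omega)).trans
              (hfe.2.2.1 i hi1 hi2), by
              rw [GPath.upd_edges, updWin_mem j g f.edges ⟨j, by omega⟩ (Or.inl rfl),
                updWin_mem j g f.edges ⟨j+1, by omega⟩ (Or.inr rfl)],
            hdble⟩
      · intro m hm
        obtain ⟨h1, h2⟩ := (Finset.mem_filter.mp hm).2
        refine GPath.ext' h1.1 ?_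
        funext i
        rw [GPath.upd_edges]
        by_cases hin : (i : ℕ) = j ∨ (i : ℕ) = j + 1
        · rw [updWin_mem j _ f.edges i hin]
          rcases hin with hin | hin
          · exact congrArg m.edges (Fin.ext hin.symm)
          · rw [show i = (⟨j+1, by omega⟩ : Fin n) from Fin.ext hin, ← h1.2.2.2.2]
        · rw [updWin_notMem j _ f.edges i hin]
          exact h1.2.2.1 i (fun hh => hin (Or.inl hh)) (fun hh => hin (Or.inr hh))
      · intro g hg
        exact updWin_mem j g f.edges ⟨j, by omega⟩ (Or.inl rfl)
      · intro m hm
        rfl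
    rw [hbij, Finset.sum_filter, Emat_entry_pos γ η j hj hfe]
    have hcast : (∑ g : E, if attachV s t j g = attachV s t j (f.edges ⟨j, by omega⟩) then
          ((((γ⁻¹ * muj s t η j g * muj s t η j (f.edges ⟨j, by omega⟩))
            * (γ⁻¹ * muj s t η j (e.edges ⟨j, by omega⟩) * muj s t η j g)) : ℝ) : ℂ) else 0)
        = ((∑ g : E, if attachV s t j g = attachV s t j (f.edges ⟨j, by omega⟩) then
            ((γ⁻¹ * muj s t η j g * muj s t η j (f.edges ⟨j, by omega⟩))
            * (γ⁻¹ * muj s t η j (e.edges ⟨j, by omega⟩) * muj s t η j g)) else 0 : ℝ) : ℂ) := by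
      rw [Complex.ofReal_sum]
      refine Finset.sum_congr rfl (fun g _ => ?_)
      by_cases hq : attachV s t j g = attachV s t j (f.edges ⟨j, by omega⟩)
      · rw [if_pos hq, if_pos hq]
      · rw [if_neg hq, if_neg hq, Complex.ofReal_zero]
    rw [hcast]
    congr 1
    have hterm : ∀ g : E,
        (if attachV s t j g = attachV s t j (f.edges ⟨j, by omega⟩) then
          ((γ⁻¹ * muj s t η j g * muj s t η j (f.edges ⟨j, by omega⟩))
          * (γ⁻¹ * muj s t η j (e.edges ⟨j, by omega⟩) * muj s t η j g)) else 0)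
        = (γ⁻¹ * γ⁻¹ * muj s t η j (f.edges ⟨j, by omega⟩)
            * muj s t η j (e.edges ⟨j, by omega⟩))
          * (if attachV s t j g = attachV s t j (f.edges ⟨j, by omega⟩) then
            (muj s t η j g)^2 else 0) := by
      intro g
      by_cases hq : attachV s t j g = attachV s t j (f.edges ⟨j, by omega⟩)
      · rw [if_pos hq, if_pos hq]; ring
      · rw [if_neg hq, if_neg hq, mul_zero]
    rw [Finset.sum_congr rfl (fun g _ => hterm g), ← Finset.mul_sum,
      sum_muj_sq γ η hη heig₁ heig₂ j _]
    field_simp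
  · rw [Emat_entry_neg γ η j hj hfe]
    apply Finset.sum_eq_zero
    intro m _
    by_cases h1 : dupAt s t j hj f m
    · by_cases h2 : dupAt s t j hj m e
      · exact absurd (dupAt_trans h1 h2) hfe
      · rw [Emat_entry_neg γ η j hj h2, mul_zero]
    · rw [Emat_entry_neg γ η j hj h1, zero_mul]

/-- Support condition for a product of two `ê`'s with disjoint windows. -/
def dupAt2 (s : E → Γa) (t : E → Γb) {n : ℕ} (a b : ℕ) (ha : a + 2 ≤ n) (hb : b + 2 ≤ n)
    (f e : GPath s t n) : Prop :=
  f.base = e.base ∧ f.endV = e.endV ∧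
    (∀ i : Fin n, (i : ℕ) ≠ a → (i : ℕ) ≠ a + 1 → (i : ℕ) ≠ b → (i : ℕ) ≠ b + 1 →
      f.edges i = e.edges i) ∧
    f.edges ⟨a, by omega⟩ = f.edges ⟨a + 1, by omega⟩ ∧
    f.edges ⟨b, by omega⟩ = f.edges ⟨b + 1, by omega⟩ ∧
    e.edges ⟨a, by omega⟩ = e.edges ⟨a + 1, by omega⟩ ∧
    e.edges ⟨b, by omega⟩ = e.edges ⟨b + 1, by omega⟩

lemma dupAt2_swap {n : ℕ} {a b : ℕ} {ha : a + 2 ≤ n} {hb : b + 2 ≤ n} {f e : GPath s t n}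
    (h : dupAt2 s t a b ha hb f e) : dupAt2 s t b a hb ha f e :=
  ⟨h.1, h.2.1, fun i i1 i2 i3 i4 => h.2.2.1 i i3 i4 i1 i2, h.2.2.2.2.1, h.2.2.2.1,
    h.2.2.2.2.2.2, h.2.2.2.2.2.1⟩

lemma attach_window {n : ℕ} (f e : GPath s t n) (a b : ℕ) (ha : a + 2 ≤ n) (hb : b + 2 ≤ n)
    (hdisj : a + 2 ≤ b ∨ b + 2 ≤ a) (hbase : f.base = e.base)
    (hagree : ∀ i : Fin n, (i : ℕ) ≠ a → (i : ℕ) ≠ a + 1 → (i : ℕ) ≠ b → (i : ℕ) ≠ b + 1 →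
      f.edges i = e.edges i)
    (hfb : f.edges ⟨b, by omega⟩ = f.edges ⟨b + 1, by omega⟩)
    (heb : e.edges ⟨b, by omega⟩ = e.edges ⟨b + 1, by omega⟩) :
    attachV s t a (f.edges ⟨a, by omega⟩) = attachV s t a (e.edges ⟨a, by omega⟩) := by
  by_cases hc : a = b + 2
  · have hbeq : attachV s t b (f.edges ⟨b, by omega⟩)
        = attachV s t b (e.edges ⟨b, by omega⟩) :=
      GPath.attach_eq f e b (by omega) hbase
        (fun h1 => hagree ⟨b - 1, by omega⟩ (show b - 1 ≠ a by omega)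
          (show b - 1 ≠ a + 1 by omega) (show b - 1 ≠ b by omega)
          (show b - 1 ≠ b + 1 by omega))
    subst hc
    calc attachV s t (b+2) (f.edges ⟨b+2, by omega⟩)
        = attachV s t (b+2) (f.edges ⟨b+1, by omega⟩) := (f.cond (b+1) (by omega)).symm
      _ = attachV s t (b+2) (f.edges ⟨b, by omega⟩) := by rw [← hfb]
      _ = attachV s t b (f.edges ⟨b, by omega⟩) := attachV_congr (even_iff_even (by omega)) _
      _ = attachV s t b (e.edges ⟨b, by omega⟩) := hbeq
      _ = attachV s t (b+2) (e.edges ⟨b, by omega⟩) :=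
          attachV_congr (even_iff_even (by omega)) _
      _ = attachV s t (b+2) (e.edges ⟨b+1, by omega⟩) := by rw [heb]
      _ = attachV s t (b+2) (e.edges ⟨b+2, by omega⟩) := e.cond (b+1) (by omega)
  · exact GPath.attach_eq f e a (by omega) hbase
      (fun h1 => hagree ⟨a - 1, by omega⟩ (show a - 1 ≠ a by omega)
        (show a - 1 ≠ a + 1 by omega) (show a - 1 ≠ b by omega)
        (show a - 1 ≠ b + 1 by omega))

lemma Emat_mul_disj_apply {n : ℕ} (a b : ℕ) (ha : a + 2 ≤ n) (hb : b + 2 ≤ n)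
    (hab : a + 2 ≤ b ∨ b + 2 ≤ a) (f e : GPath s t n) :
    (Emat s t γ η a ha * Emat s t γ η b hb) f e =
      if dupAt2 s t a b ha hb f e then
        ((((γ⁻¹ * muj s t η a (e.edges ⟨a, by omega⟩) * muj s t η a (f.edges ⟨a, by omega⟩))
          * (γ⁻¹ * muj s t η b (e.edges ⟨b, by omega⟩) * muj s t η b (f.edges ⟨b, by omega⟩)))
          : ℝ) : ℂ)
      else 0 := by
  rw [Matrix.mul_apply]
  have hPQ : ∀ m : GPath s t n, dupAt s t a ha f m → dupAt s t b hb m e →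
      dupAt2 s t a b ha hb f e := by
    intro m h1 h2
    refine ⟨h1.1.trans h2.1, h1.2.1.trans h2.2.1, ?_, h1.2.2.2.1, ?_, ?_, h2.2.2.2.2⟩
    · intro i i1 i2 i3 i4
      exact (h1.2.2.1 i i1 i2).trans (h2.2.2.1 i i3 i4)
    · rw [h1.2.2.1 ⟨b, by omega⟩ (show b ≠ a by omega) (show b ≠ a + 1 by omega),
        h1.2.2.1 ⟨b+1, by omega⟩ (show b+1 ≠ a by omega) (show b+1 ≠ a + 1 by omega)]
      exact h2.2.2.2.1
    · rw [← h2.2.2.1 ⟨a, by omega⟩ (show a ≠ b by omega) (show a ≠ b + 1 by omega),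
        ← h2.2.2.1 ⟨a+1, by omega⟩ (show a+1 ≠ b by omega) (show a+1 ≠ b + 1 by omega)]
      exact h1.2.2.2.2
  by_cases hq : dupAt2 s t a b ha hb f e
  · have hfa : f.edges ⟨a, by omega⟩ = f.edges ⟨a+1, by omega⟩ := hq.2.2.2.1
    have hfb : f.edges ⟨b, by omega⟩ = f.edges ⟨b+1, by omega⟩ := hq.2.2.2.2.1
    have hea : e.edges ⟨a, by omega⟩ = e.edges ⟨a+1, by omega⟩ := hq.2.2.2.2.2.1
    have heb : e.edges ⟨b, by omega⟩ = e.edges ⟨b+1, by omega⟩ := hq.2.2.2.2.2.2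
    have hatt : attachV s t a (e.edges ⟨a, by omega⟩)
        = attachV s t a (f.edges ⟨a, by omega⟩) :=
      (attach_window f e a b ha hb hab hq.1 hq.2.2.1 hfb heb).symm
    set m₀ : GPath s t n := f.upd a ha (e.edges ⟨a, by omega⟩) hfa hatt with hm₀def
    have hm₀edges : m₀.edges = updWin a (e.edges ⟨a, by omega⟩) f.edges := rfl
    have hm₀a : m₀.edges ⟨a, by omega⟩ = e.edges ⟨a, by omega⟩ := by
      rw [hm₀edges]
      exact updWin_mem a _ f.edges ⟨a, by omega⟩ (Or.inl rfl)
    have hm₀a1 : m₀.edges ⟨a+1, by omega⟩ = e.edges ⟨a, by omega⟩ := by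
      rw [hm₀edges]
      exact updWin_mem a _ f.edges ⟨a+1, by omega⟩ (Or.inr rfl)
    have hm₀b : m₀.edges ⟨b, by omega⟩ = f.edges ⟨b, by omega⟩ := by
      rw [hm₀edges]
      exact updWin_notMem a _ f.edges ⟨b, by omega⟩ (show ¬(b = a ∨ b = a+1) by omega)
    have hm₀b1 : m₀.edges ⟨b+1, by omega⟩ = f.edges ⟨b+1, by omega⟩ := by
      rw [hm₀edges]
      exact updWin_notMem a _ f.edges ⟨b+1, by omega⟩ (show ¬(b+1 = a ∨ b+1 = a+1) by omega)
    have h1 : dupAt s t a ha f m₀ := by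
      refine ⟨rfl, (f.upd_endV a ha _ hfa hatt).symm, ?_, hfa, ?_⟩
      · intro i i1 i2
        rw [hm₀edges]
        exact (updWin_notMem a _ f.edges i (by omega)).symm
      · rw [hm₀a, hm₀a1]
    have h2 : dupAt s t b hb m₀ e := by
      refine ⟨hq.1, (f.upd_endV a ha _ hfa hatt).trans hq.2.1, ?_, ?_, heb⟩
      · intro i i1 i2
        rw [hm₀edges]
        by_cases hin : (i : ℕ) = a ∨ (i : ℕ) = a + 1
        · rw [updWin_mem a _ f.edges i hin]
          rcases hin with hin | hin
          · exact congrArg e.edges (Fin.ext hin.symm)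
          · rw [hea]
            exact congrArg e.edges (Fin.ext hin.symm)
        · rw [updWin_notMem a _ f.edges i hin]
          exact hq.2.2.1 i (fun hh => hin (Or.inl hh)) (fun hh => hin (Or.inr hh)) i1 i2
      · rw [hm₀b, hm₀b1]
        exact hfb
    have hside : ∀ m ∈ (Finset.univ : Finset (GPath s t n)), m ≠ m₀ →
        Emat s t γ η a ha f m * Emat s t γ η b hb m e = 0 := by
      intro m _ hne
      by_cases d1 : dupAt s t a ha f m
      · by_cases d2 : dupAt s t b hb m e
        · exfalso
          apply hne
          refine GPath.ext' d1.1.symm ?_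
          funext i
          rw [hm₀edges]
          by_cases hin : (i : ℕ) = a ∨ (i : ℕ) = a + 1
          · rw [updWin_mem a _ f.edges i hin]
            rcases hin with hin | hin
            · rw [show i = (⟨a, by omega⟩ : Fin n) from Fin.ext hin]
              exact d2.2.2.1 ⟨a, by omega⟩ (show a ≠ b by omega) (show a ≠ b + 1 by omega)
            · rw [show i = (⟨a+1, by omega⟩ : Fin n) from Fin.ext hin, ← d1.2.2.2.2]
              rw [d2.2.2.1 ⟨a, by omega⟩ (show a ≠ b by omega) (show a ≠ b + 1 by omega)]
          · rw [updWin_notMem a _ f.edges i hin]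
            exact (d1.2.2.1 i (fun hh => hin (Or.inl hh)) (fun hh => hin (Or.inr hh))).symm
        · rw [Emat_entry_neg γ η b hb d2, mul_zero]
      · rw [Emat_entry_neg γ η a ha d1, zero_mul]
    rw [Finset.sum_eq_single_of_mem m₀ (Finset.mem_univ _) hside, if_pos hq,
      Emat_entry_pos γ η a ha h1, Emat_entry_pos γ η b hb h2, hm₀a, hm₀b]
    push_cast
    ring
  · rw [if_neg hq]
    apply Finset.sum_eq_zero
    intro m _
    by_cases d1 : dupAt s t a ha f m
    · by_cases d2 : dupAt s t b hb m e
      · exact absurd (hPQ m d1 d2) hq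
      · rw [Emat_entry_neg γ η b hb d2, mul_zero]
    · rw [Emat_entry_neg γ η a ha d1, zero_mul]

lemma Emat_comm {n : ℕ} (a b : ℕ) (ha : a + 2 ≤ n) (hb : b + 2 ≤ n)
    (hab : a + 2 ≤ b ∨ b + 2 ≤ a) :
    Emat s t γ η a ha * Emat s t γ η b hb = Emat s t γ η b hb * Emat s t γ η a ha := by
  funext f e
  rw [Emat_mul_disj_apply γ η a b ha hb hab f e, Emat_mul_disj_apply γ η b a hb ha hab.symm f e]
  by_cases hq : dupAt2 s t a b ha hb f e
  · rw [if_pos hq, if_pos (dupAt2_swap hq)]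
    push_cast
    ring
  · rw [if_neg hq, if_neg (fun hh => hq (dupAt2_swap hh))]


lemma Emat_braid₁ (hγ : 0 < γ) (hη : ∀ x, 0 < η x) {n : ℕ} (a : ℕ) (h3 : a + 3 ≤ n)
    (ha : a + 2 ≤ n) (hb : (a+1) + 2 ≤ n) :
    (Emat s t γ η a ha * Emat s t γ η (a+1) hb) * Emat s t γ η a ha
      = (((γ : ℂ))^2)⁻¹ • Emat s t γ η a ha := by
  funext f e
  rw [Matrix.smul_apply, smul_eq_mul, Matrix.mul_apply]
  have expand : ∀ m2 : GPath s t n, (Emat s t γ η a ha * Emat s t γ η (a+1) hb) f m2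
      * Emat s t γ η a ha m2 e
      = ∑ m1 : GPath s t n, Emat s t γ η a ha f m1 * Emat s t γ η (a+1) hb m1 m2
          * Emat s t γ η a ha m2 e := by
    intro m2
    rw [Matrix.mul_apply, Finset.sum_mul]
  rw [Finset.sum_congr rfl (fun m2 _ => expand m2)]
  by_cases h : dupAt s t a ha f e
  · have hdblf : f.edges ⟨a, by omega⟩ = f.edges ⟨a+1, by omega⟩ := h.2.2.2.1
    have hdble : e.edges ⟨a, by omega⟩ = e.edges ⟨a+1, by omega⟩ := h.2.2.2.2
    have hc2 : a + 2 < n := by omega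
    have hcc : f.edges ⟨a+2, hc2⟩ = e.edges ⟨a+2, hc2⟩ :=
      h.2.2.1 ⟨a+2, hc2⟩ (show a+2 ≠ a by omega) (show a+2 ≠ a+1 by omega)
    have hcf : attachV s t a (f.edges ⟨a+2, hc2⟩) = attachV s t a (f.edges ⟨a, by omega⟩) :=
      f.attach_dbl a hc2 hdblf
    have hce : attachV s t a (e.edges ⟨a+2, hc2⟩) = attachV s t a (e.edges ⟨a, by omega⟩) :=
      e.attach_dbl a hc2 hdble
    set m1₀ : GPath s t n := f.upd a ha (f.edges ⟨a+2, hc2⟩) hdblf hcf with hm1def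
    set m2₀ : GPath s t n := e.upd a ha (e.edges ⟨a+2, hc2⟩) hdble hce with hm2def
    have hm1edges : m1₀.edges = updWin a (f.edges ⟨a+2, hc2⟩) f.edges := rfl
    have hm2edges : m2₀.edges = updWin a (e.edges ⟨a+2, hc2⟩) e.edges := rfl
    have hm1a : m1₀.edges ⟨a, by omega⟩ = f.edges ⟨a+2, hc2⟩ :=
      updWin_mem a _ f.edges ⟨a, by omega⟩ (Or.inl rfl)
    have hm1a1 : m1₀.edges ⟨a+1, by omega⟩ = f.edges ⟨a+2, hc2⟩ :=
      updWin_mem a _ f.edges ⟨a+1, by omega⟩ (Or.inr rfl)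
    have hm1a2 : m1₀.edges ⟨a+2, by omega⟩ = f.edges ⟨a+2, hc2⟩ :=
      updWin_notMem a _ f.edges ⟨a+2, by omega⟩ (show ¬(a+2 = a ∨ a+2 = a+1) by omega)
    have hm2a : m2₀.edges ⟨a, by omega⟩ = e.edges ⟨a+2, hc2⟩ :=
      updWin_mem a _ e.edges ⟨a, by omega⟩ (Or.inl rfl)
    have hm2a1 : m2₀.edges ⟨a+1, by omega⟩ = e.edges ⟨a+2, hc2⟩ :=
      updWin_mem a _ e.edges ⟨a+1, by omega⟩ (Or.inr rfl)
    have hm2a2 : m2₀.edges ⟨a+2, by omega⟩ = e.edges ⟨a+2, hc2⟩ :=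
      updWin_notMem a _ e.edges ⟨a+2, by omega⟩ (show ¬(a+2 = a ∨ a+2 = a+1) by omega)
    have H1 : dupAt s t a ha f m1₀ := by
      refine ⟨rfl, (f.upd_endV a ha _ hdblf hcf).symm, ?_, hdblf, ?_⟩
      · intro i i1 i2
        exact (updWin_notMem a _ f.edges i (by omega)).symm
      · rw [hm1a, hm1a1]
    have H2 : dupAt s t a ha m2₀ e := by
      refine ⟨rfl, e.upd_endV a ha _ hdble hce, ?_, ?_, hdble⟩
      · intro i i1 i2
        exact updWin_notMem a _ e.edges i (by omega)
      · rw [hm2a, hm2a1]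
    have Hb : dupAt s t (a+1) hb m1₀ m2₀ := by
      refine ⟨h.1, ((f.upd_endV a ha _ hdblf hcf).trans h.2.1).trans
        (e.upd_endV a ha _ hdble hce).symm, ?_, ?_, ?_⟩
      · intro i i1 i2
        by_cases hia : (i : ℕ) = a
        · rw [hm1edges, hm2edges, updWin_mem a _ f.edges i (Or.inl hia),
            updWin_mem a _ e.edges i (Or.inl hia)]
          exact hcc
        · rw [hm1edges, hm2edges, updWin_notMem a _ f.edges i (by omega),
            updWin_notMem a _ e.edges i (by omega)]
          exact h.2.2.1 i (by omega) (by omega)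
      · rw [hm1a1, hm1a2]
      · rw [hm2a1, hm2a2]
    have huniq1 : ∀ m1 : GPath s t n, dupAt s t a ha f m1 →
        dupAt s t (a+1) hb m1 m2₀ → m1 = m1₀ := by
      intro m1 d1 db
      have e1 : m1.edges ⟨a, by omega⟩ = m1.edges ⟨a+1, by omega⟩ := d1.2.2.2.2
      have e2 : m1.edges ⟨a+1, by omega⟩ = m1.edges ⟨a+2, by omega⟩ := db.2.2.2.1
      have e3 : m1.edges ⟨a+2, by omega⟩ = f.edges ⟨a+2, hc2⟩ :=
        (d1.2.2.1 ⟨a+2, by omega⟩ (show a+2 ≠ a by omega) (show a+2 ≠ a+1 by omega)).symm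
      refine GPath.ext' d1.1.symm ?_
      funext i
      rw [hm1edges]
      by_cases hin : (i : ℕ) = a ∨ (i : ℕ) = a + 1
      · rw [updWin_mem a _ f.edges i hin]
        rcases hin with hin | hin
        · rw [show i = (⟨a, by omega⟩ : Fin n) from Fin.ext hin, e1, e2, e3]
        · rw [show i = (⟨a+1, by omega⟩ : Fin n) from Fin.ext hin, e2, e3]
      · rw [updWin_notMem a _ f.edges i hin]
        exact (d1.2.2.1 i (fun hh => hin (Or.inl hh)) (fun hh => hin (Or.inr hh))).symm
    have huniq2 : ∀ m1 m2 : GPath s t n, dupAt s t a ha f m1 →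
        dupAt s t (a+1) hb m1 m2 → dupAt s t a ha m2 e → m2 = m2₀ := by
      intro m1 m2 d1 db d2
      have e1 : m1.edges ⟨a, by omega⟩ = m1.edges ⟨a+1, by omega⟩ := d1.2.2.2.2
      have e2 : m1.edges ⟨a+1, by omega⟩ = m1.edges ⟨a+2, by omega⟩ := db.2.2.2.1
      have e3 : m1.edges ⟨a+2, by omega⟩ = f.edges ⟨a+2, hc2⟩ :=
        (d1.2.2.1 ⟨a+2, by omega⟩ (show a+2 ≠ a by omega) (show a+2 ≠ a+1 by omega)).symm
      have e4 : m2.edges ⟨a, by omega⟩ = m1.edges ⟨a, by omega⟩ :=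
        (db.2.2.1 ⟨a, by omega⟩ (show a ≠ a+1 by omega) (show a ≠ a+2 by omega)).symm
      have e5 : m2.edges ⟨a, by omega⟩ = m2.edges ⟨a+1, by omega⟩ := d2.2.2.2.1
      have echain : m2.edges ⟨a, by omega⟩ = e.edges ⟨a+2, hc2⟩ := by
        rw [e4, e1, e2, e3, hcc]
      refine GPath.ext' d2.1 ?_
      funext i
      rw [hm2edges]
      by_cases hin : (i : ℕ) = a ∨ (i : ℕ) = a + 1
      · rw [updWin_mem a _ e.edges i hin]
        rcases hin with hin | hin
        · rw [show i = (⟨a, by omega⟩ : Fin n) from Fin.ext hin, echain]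
        · rw [show i = (⟨a+1, by omega⟩ : Fin n) from Fin.ext hin, ← e5, echain]
      · rw [updWin_notMem a _ e.edges i hin]
        exact d2.2.2.1 i (fun hh => hin (Or.inl hh)) (fun hh => hin (Or.inr hh))
    have houter : ∀ m2 ∈ (Finset.univ : Finset (GPath s t n)), m2 ≠ m2₀ →
        (∑ m1 : GPath s t n, Emat s t γ η a ha f m1 * Emat s t γ η (a+1) hb m1 m2
          * Emat s t γ η a ha m2 e) = 0 := by
      intro m2 _ hne
      apply Finset.sum_eq_zero
      intro m1 _
      by_cases d2 : dupAt s t a ha m2 e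
      · by_cases d1 : dupAt s t a ha f m1
        · by_cases db : dupAt s t (a+1) hb m1 m2
          · exact absurd (huniq2 m1 m2 d1 db d2) hne
          · rw [Emat_entry_neg γ η (a+1) hb db, mul_zero, zero_mul]
        · rw [Emat_entry_neg γ η a ha d1, zero_mul, zero_mul]
      · rw [Emat_entry_neg γ η a ha d2, mul_zero]
    have hinner : ∀ m1 ∈ (Finset.univ : Finset (GPath s t n)), m1 ≠ m1₀ →
        Emat s t γ η a ha f m1 * Emat s t γ η (a+1) hb m1 m2₀
          * Emat s t γ η a ha m2₀ e = 0 := by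
      intro m1 _ hne
      by_cases d1 : dupAt s t a ha f m1
      · by_cases db : dupAt s t (a+1) hb m1 m2₀
        · exact absurd (huniq1 m1 d1 db) hne
        · rw [Emat_entry_neg γ η (a+1) hb db, mul_zero, zero_mul]
      · rw [Emat_entry_neg γ η a ha d1, zero_mul, zero_mul]
    rw [Finset.sum_eq_single_of_mem m2₀ (Finset.mem_univ _) houter,
      Finset.sum_eq_single_of_mem m1₀ (Finset.mem_univ _) hinner,
      Emat_entry_pos γ η a ha H1, Emat_entry_pos γ η (a+1) hb Hb,
      Emat_entry_pos γ η a ha H2, Emat_entry_pos γ η a ha h,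
      hm1a, hm1a1, hm2a, hm2a1, ← hcc]
    have hadj := muj_sq_adj (s := s) (t := t) η hη a (f.edges ⟨a+2, hc2⟩)
    have hreal : (γ⁻¹ * muj s t η a (f.edges ⟨a+2, hc2⟩) * muj s t η a (f.edges ⟨a, by omega⟩))
        * (γ⁻¹ * muj s t η (a+1) (f.edges ⟨a+2, hc2⟩) * muj s t η (a+1) (f.edges ⟨a+2, hc2⟩))
        * (γ⁻¹ * muj s t η a (e.edges ⟨a, by omega⟩) * muj s t η a (f.edges ⟨a+2, hc2⟩))
        = (γ^2)⁻¹ * (γ⁻¹ * muj s t η a (e.edges ⟨a, by omega⟩)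
            * muj s t η a (f.edges ⟨a, by omega⟩)) := by
      have expand2 : (γ⁻¹ * muj s t η a (f.edges ⟨a+2, hc2⟩)
            * muj s t η a (f.edges ⟨a, by omega⟩))
          * (γ⁻¹ * muj s t η (a+1) (f.edges ⟨a+2, hc2⟩)
            * muj s t η (a+1) (f.edges ⟨a+2, hc2⟩))
          * (γ⁻¹ * muj s t η a (e.edges ⟨a, by omega⟩) * muj s t η a (f.edges ⟨a+2, hc2⟩))
          = γ⁻¹ * γ⁻¹ * γ⁻¹ * muj s t η a (f.edges ⟨a, by omega⟩)
            * muj s t η a (e.edges ⟨a, by omega⟩)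
            * ((muj s t η a (f.edges ⟨a+2, hc2⟩))^2
              * (muj s t η (a+1) (f.edges ⟨a+2, hc2⟩))^2) := by ring
      rw [expand2, hadj, mul_one]
      ring
    rw [← Complex.ofReal_mul, ← Complex.ofReal_mul, hreal]
    push_cast
    ring
  · rw [Emat_entry_neg γ η a ha h, mul_zero]
    apply Finset.sum_eq_zero
    intro m2 _
    apply Finset.sum_eq_zero
    intro m1 _
    by_cases d2 : dupAt s t a ha m2 e
    · by_cases d1 : dupAt s t a ha f m1
      · by_cases db : dupAt s t (a+1) hb m1 m2
        · exfalso
          apply h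
          refine ⟨d1.1.trans (db.1.trans d2.1), d1.2.1.trans (db.2.1.trans d2.2.1), ?_,
            d1.2.2.2.1, d2.2.2.2.2⟩
          intro i i1 i2
          by_cases hia2 : (i : ℕ) = a + 2
          · rw [show i = (⟨a+2, by omega⟩ : Fin n) from Fin.ext hia2]
            have c1 : f.edges ⟨a+2, by omega⟩ = m1.edges ⟨a+2, by omega⟩ :=
              d1.2.2.1 ⟨a+2, by omega⟩ (show a+2 ≠ a by omega) (show a+2 ≠ a+1 by omega)
            have c2 : m1.edges ⟨a+1, by omega⟩ = m1.edges ⟨a+2, by omega⟩ := db.2.2.2.1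
            have c3 : m1.edges ⟨a, by omega⟩ = m1.edges ⟨a+1, by omega⟩ := d1.2.2.2.2
            have c4 : m1.edges ⟨a, by omega⟩ = m2.edges ⟨a, by omega⟩ :=
              db.2.2.1 ⟨a, by omega⟩ (show a ≠ a+1 by omega) (show a ≠ a+2 by omega)
            have c5 : m2.edges ⟨a, by omega⟩ = m2.edges ⟨a+1, by omega⟩ := d2.2.2.2.1
            have c6 : m2.edges ⟨a+1, by omega⟩ = m2.edges ⟨a+2, by omega⟩ := db.2.2.2.2
            have c7 : m2.edges ⟨a+2, by omega⟩ = e.edges ⟨a+2, by omega⟩ :=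
              d2.2.2.1 ⟨a+2, by omega⟩ (show a+2 ≠ a by omega) (show a+2 ≠ a+1 by omega)
            rw [c1, ← c2, ← c3, c4, c5, c6, c7]
          · have c1 : f.edges i = m1.edges i := d1.2.2.1 i i1 i2
            have c2 : m1.edges i = m2.edges i :=
              db.2.2.1 i (by omega) (by omega)
            have c3 : m2.edges i = e.edges i := d2.2.2.1 i i1 i2
            rw [c1, c2, c3]
        · rw [Emat_entry_neg γ η (a+1) hb db, mul_zero, zero_mul]
      · rw [Emat_entry_neg γ η a ha d1, zero_mul, zero_mul]
    · rw [Emat_entry_neg γ η a ha d2, mul_zero]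


lemma Emat_braid₂ (hγ : 0 < γ) (hη : ∀ x, 0 < η x) {n : ℕ} (b : ℕ) (h3 : b + 3 ≤ n)
    (ha : (b+1) + 2 ≤ n) (hb : b + 2 ≤ n) :
    (Emat s t γ η (b+1) ha * Emat s t γ η b hb) * Emat s t γ η (b+1) ha
      = (((γ : ℂ))^2)⁻¹ • Emat s t γ η (b+1) ha := by
  funext f e
  rw [Matrix.smul_apply, smul_eq_mul, Matrix.mul_apply]
  have expand : ∀ m2 : GPath s t n, (Emat s t γ η (b+1) ha * Emat s t γ η b hb) f m2
      * Emat s t γ η (b+1) ha m2 e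
      = ∑ m1 : GPath s t n, Emat s t γ η (b+1) ha f m1 * Emat s t γ η b hb m1 m2
          * Emat s t γ η (b+1) ha m2 e := by
    intro m2
    rw [Matrix.mul_apply, Finset.sum_mul]
  rw [Finset.sum_congr rfl (fun m2 _ => expand m2)]
  by_cases h : dupAt s t (b+1) ha f e
  · have hdblf : f.edges ⟨b+1, by omega⟩ = f.edges ⟨b+2, by omega⟩ := h.2.2.2.1
    have hdble : e.edges ⟨b+1, by omega⟩ = e.edges ⟨b+2, by omega⟩ := h.2.2.2.2
    have hb1 : b < n := by omega
    have hcc : f.edges ⟨b, hb1⟩ = e.edges ⟨b, hb1⟩ :=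
      h.2.2.1 ⟨b, hb1⟩ (show b ≠ b+1 by omega) (show b ≠ b+2 by omega)
    have hcf : attachV s t (b+1) (f.edges ⟨b, hb1⟩)
        = attachV s t (b+1) (f.edges ⟨b+1, by omega⟩) := f.cond b (by omega)
    have hce : attachV s t (b+1) (e.edges ⟨b, hb1⟩)
        = attachV s t (b+1) (e.edges ⟨b+1, by omega⟩) := e.cond b (by omega)
    set m1₀ : GPath s t n := f.upd (b+1) ha (f.edges ⟨b, hb1⟩) hdblf hcf with hm1def
    set m2₀ : GPath s t n := e.upd (b+1) ha (e.edges ⟨b, hb1⟩) hdble hce with hm2def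
    have hm1edges : m1₀.edges = updWin (b+1) (f.edges ⟨b, hb1⟩) f.edges := rfl
    have hm2edges : m2₀.edges = updWin (b+1) (e.edges ⟨b, hb1⟩) e.edges := rfl
    have hm1b : m1₀.edges ⟨b, by omega⟩ = f.edges ⟨b, hb1⟩ :=
      updWin_notMem (b+1) _ f.edges ⟨b, by omega⟩ (show ¬(b = b+1 ∨ b = b+2) by omega)
    have hm1b1 : m1₀.edges ⟨b+1, by omega⟩ = f.edges ⟨b, hb1⟩ :=
      updWin_mem (b+1) _ f.edges ⟨b+1, by omega⟩ (Or.inl rfl)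
    have hm1b2 : m1₀.edges ⟨b+2, by omega⟩ = f.edges ⟨b, hb1⟩ :=
      updWin_mem (b+1) _ f.edges ⟨b+2, by omega⟩ (Or.inr rfl)
    have hm2b : m2₀.edges ⟨b, by omega⟩ = e.edges ⟨b, hb1⟩ :=
      updWin_notMem (b+1) _ e.edges ⟨b, by omega⟩ (show ¬(b = b+1 ∨ b = b+2) by omega)
    have hm2b1 : m2₀.edges ⟨b+1, by omega⟩ = e.edges ⟨b, hb1⟩ :=
      updWin_mem (b+1) _ e.edges ⟨b+1, by omega⟩ (Or.inl rfl)
    have hm2b2 : m2₀.edges ⟨b+2, by omega⟩ = e.edges ⟨b, hb1⟩ :=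
      updWin_mem (b+1) _ e.edges ⟨b+2, by omega⟩ (Or.inr rfl)
    have H1 : dupAt s t (b+1) ha f m1₀ := by
      refine ⟨rfl, (f.upd_endV (b+1) ha _ hdblf hcf).symm, ?_, hdblf, ?_⟩
      · intro i i1 i2
        exact (updWin_notMem (b+1) _ f.edges i (by omega)).symm
      · rw [hm1b1, hm1b2]
    have H2 : dupAt s t (b+1) ha m2₀ e := by
      refine ⟨rfl, e.upd_endV (b+1) ha _ hdble hce, ?_, ?_, hdble⟩
      · intro i i1 i2
        exact updWin_notMem (b+1) _ e.edges i (by omega)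
      · rw [hm2b1, hm2b2]
    have Hb : dupAt s t b hb m1₀ m2₀ := by
      refine ⟨h.1, ((f.upd_endV (b+1) ha _ hdblf hcf).trans h.2.1).trans
        (e.upd_endV (b+1) ha _ hdble hce).symm, ?_, ?_, ?_⟩
      · intro i i1 i2
        by_cases hia : (i : ℕ) = b + 2
        · rw [hm1edges, hm2edges, updWin_mem (b+1) _ f.edges i (Or.inr hia),
            updWin_mem (b+1) _ e.edges i (Or.inr hia)]
          exact hcc
        · rw [hm1edges, hm2edges, updWin_notMem (b+1) _ f.edges i (by omega),
            updWin_notMem (b+1) _ e.edges i (by omega)]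
          exact h.2.2.1 i (by omega) (by omega)
      · rw [hm1b, hm1b1]
      · rw [hm2b, hm2b1]
    have huniq1 : ∀ m1 : GPath s t n, dupAt s t (b+1) ha f m1 →
        dupAt s t b hb m1 m2₀ → m1 = m1₀ := by
      intro m1 d1 db
      have e1 : m1.edges ⟨b+1, by omega⟩ = m1.edges ⟨b+2, by omega⟩ := d1.2.2.2.2
      have e2 : m1.edges ⟨b, by omega⟩ = m1.edges ⟨b+1, by omega⟩ := db.2.2.2.1
      have e3 : m1.edges ⟨b, by omega⟩ = f.edges ⟨b, hb1⟩ :=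
        (d1.2.2.1 ⟨b, by omega⟩ (show b ≠ b+1 by omega) (show b ≠ b+2 by omega)).symm
      refine GPath.ext' d1.1.symm ?_
      funext i
      rw [hm1edges]
      by_cases hin : (i : ℕ) = b + 1 ∨ (i : ℕ) = b + 2
      · rw [updWin_mem (b+1) _ f.edges i hin]
        rcases hin with hin | hin
        · rw [show i = (⟨b+1, by omega⟩ : Fin n) from Fin.ext hin, ← e2, e3]
        · rw [show i = (⟨b+2, by omega⟩ : Fin n) from Fin.ext hin, ← e1, ← e2, e3]
      · rw [updWin_notMem (b+1) _ f.edges i hin]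
        exact (d1.2.2.1 i (fun hh => hin (Or.inl hh)) (fun hh => hin (Or.inr hh))).symm
    have huniq2 : ∀ m1 m2 : GPath s t n, dupAt s t (b+1) ha f m1 →
        dupAt s t b hb m1 m2 → dupAt s t (b+1) ha m2 e → m2 = m2₀ := by
      intro m1 m2 d1 db d2
      have e4 : m2.edges ⟨b, by omega⟩ = m2.edges ⟨b+1, by omega⟩ := db.2.2.2.2
      have e5 : m2.edges ⟨b+1, by omega⟩ = m2.edges ⟨b+2, by omega⟩ := d2.2.2.2.1
      have e6 : m2.edges ⟨b, by omega⟩ = e.edges ⟨b, hb1⟩ :=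
        d2.2.2.1 ⟨b, by omega⟩ (show b ≠ b+1 by omega) (show b ≠ b+2 by omega)
      refine GPath.ext' d2.1 ?_
      funext i
      rw [hm2edges]
      by_cases hin : (i : ℕ) = b + 1 ∨ (i : ℕ) = b + 2
      · rw [updWin_mem (b+1) _ e.edges i hin]
        rcases hin with hin | hin
        · rw [show i = (⟨b+1, by omega⟩ : Fin n) from Fin.ext hin, ← e4, e6]
        · rw [show i = (⟨b+2, by omega⟩ : Fin n) from Fin.ext hin, ← e5, ← e4, e6]
      · rw [updWin_notMem (b+1) _ e.edges i hin]
        exact d2.2.2.1 i (fun hh => hin (Or.inl hh)) (fun hh => hin (Or.inr hh))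
    have houter : ∀ m2 ∈ (Finset.univ : Finset (GPath s t n)), m2 ≠ m2₀ →
        (∑ m1 : GPath s t n, Emat s t γ η (b+1) ha f m1 * Emat s t γ η b hb m1 m2
          * Emat s t γ η (b+1) ha m2 e) = 0 := by
      intro m2 _ hne
      apply Finset.sum_eq_zero
      intro m1 _
      by_cases d2 : dupAt s t (b+1) ha m2 e
      · by_cases d1 : dupAt s t (b+1) ha f m1
        · by_cases db : dupAt s t b hb m1 m2
          · exact absurd (huniq2 m1 m2 d1 db d2) hne
          · rw [Emat_entry_neg γ η b hb db, mul_zero, zero_mul]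
        · rw [Emat_entry_neg γ η (b+1) ha d1, zero_mul, zero_mul]
      · rw [Emat_entry_neg γ η (b+1) ha d2, mul_zero]
    have hinner : ∀ m1 ∈ (Finset.univ : Finset (GPath s t n)), m1 ≠ m1₀ →
        Emat s t γ η (b+1) ha f m1 * Emat s t γ η b hb m1 m2₀
          * Emat s t γ η (b+1) ha m2₀ e = 0 := by
      intro m1 _ hne
      by_cases d1 : dupAt s t (b+1) ha f m1
      · by_cases db : dupAt s t b hb m1 m2₀
        · exact absurd (huniq1 m1 d1 db) hne
        · rw [Emat_entry_neg γ η b hb db, mul_zero, zero_mul]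
      · rw [Emat_entry_neg γ η (b+1) ha d1, zero_mul, zero_mul]
    rw [Finset.sum_eq_single_of_mem m2₀ (Finset.mem_univ _) houter,
      Finset.sum_eq_single_of_mem m1₀ (Finset.mem_univ _) hinner,
      Emat_entry_pos γ η (b+1) ha H1, Emat_entry_pos γ η b hb Hb,
      Emat_entry_pos γ η (b+1) ha H2, Emat_entry_pos γ η (b+1) ha h,
      hm1b, hm1b1, hm2b, hm2b1, ← hcc]
    have hadj := muj_sq_adj (s := s) (t := t) η hη b (f.edges ⟨b, hb1⟩)
    have hreal : (γ⁻¹ * muj s t η (b+1) (f.edges ⟨b, hb1⟩)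
          * muj s t η (b+1) (f.edges ⟨b+1, by omega⟩))
        * (γ⁻¹ * muj s t η b (f.edges ⟨b, hb1⟩) * muj s t η b (f.edges ⟨b, hb1⟩))
        * (γ⁻¹ * muj s t η (b+1) (e.edges ⟨b+1, by omega⟩) * muj s t η (b+1) (f.edges ⟨b, hb1⟩))
        = (γ^2)⁻¹ * (γ⁻¹ * muj s t η (b+1) (e.edges ⟨b+1, by omega⟩)
            * muj s t η (b+1) (f.edges ⟨b+1, by omega⟩)) := by
      have expand2 : (γ⁻¹ * muj s t η (b+1) (f.edges ⟨b, hb1⟩)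
            * muj s t η (b+1) (f.edges ⟨b+1, by omega⟩))
          * (γ⁻¹ * muj s t η b (f.edges ⟨b, hb1⟩) * muj s t η b (f.edges ⟨b, hb1⟩))
          * (γ⁻¹ * muj s t η (b+1) (e.edges ⟨b+1, by omega⟩)
            * muj s t η (b+1) (f.edges ⟨b, hb1⟩))
          = γ⁻¹ * γ⁻¹ * γ⁻¹ * muj s t η (b+1) (f.edges ⟨b+1, by omega⟩)
            * muj s t η (b+1) (e.edges ⟨b+1, by omega⟩)
            * ((muj s t η b (f.edges ⟨b, hb1⟩))^2
              * (muj s t η (b+1) (f.edges ⟨b, hb1⟩))^2) := by ring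
      rw [expand2, hadj, mul_one]
      ring
    rw [← Complex.ofReal_mul, ← Complex.ofReal_mul, hreal]
    push_cast
    ring
  · rw [Emat_entry_neg γ η (b+1) ha h, mul_zero]
    apply Finset.sum_eq_zero
    intro m2 _
    apply Finset.sum_eq_zero
    intro m1 _
    by_cases d2 : dupAt s t (b+1) ha m2 e
    · by_cases d1 : dupAt s t (b+1) ha f m1
      · by_cases db : dupAt s t b hb m1 m2
        · exfalso
          apply h
          refine ⟨d1.1.trans (db.1.trans d2.1), d1.2.1.trans (db.2.1.trans d2.2.1), ?_,
            d1.2.2.2.1, d2.2.2.2.2⟩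
          intro i i1 i2
          by_cases hib : (i : ℕ) = b
          · rw [show i = (⟨b, by omega⟩ : Fin n) from Fin.ext hib]
            have c1 : f.edges ⟨b, by omega⟩ = m1.edges ⟨b, by omega⟩ :=
              d1.2.2.1 ⟨b, by omega⟩ (show b ≠ b+1 by omega) (show b ≠ b+2 by omega)
            have c2 : m1.edges ⟨b, by omega⟩ = m1.edges ⟨b+1, by omega⟩ := db.2.2.2.1
            have c3 : m1.edges ⟨b+1, by omega⟩ = m1.edges ⟨b+2, by omega⟩ := d1.2.2.2.2
            have c4 : m1.edges ⟨b+2, by omega⟩ = m2.edges ⟨b+2, by omega⟩ :=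
              db.2.2.1 ⟨b+2, by omega⟩ (show b+2 ≠ b by omega) (show b+2 ≠ b+1 by omega)
            have c5 : m2.edges ⟨b+1, by omega⟩ = m2.edges ⟨b+2, by omega⟩ := d2.2.2.2.1
            have c6 : m2.edges ⟨b, by omega⟩ = m2.edges ⟨b+1, by omega⟩ := db.2.2.2.2
            have c7 : m2.edges ⟨b, by omega⟩ = e.edges ⟨b, by omega⟩ :=
              d2.2.2.1 ⟨b, by omega⟩ (show b ≠ b+1 by omega) (show b ≠ b+2 by omega)
            rw [c1, c2, c3, c4, ← c5, ← c6, c7]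
          · have c1 : f.edges i = m1.edges i := d1.2.2.1 i i1 i2
            have c2 : m1.edges i = m2.edges i :=
              db.2.2.1 i (by omega) (by omega)
            have c3 : m2.edges i = e.edges i := d2.2.2.1 i i1 i2
            rw [c1, c2, c3]
        · rw [Emat_entry_neg γ η b hb db, mul_zero, zero_mul]
      · rw [Emat_entry_neg γ η (b+1) ha d1, zero_mul, zero_mul]
    · rw [Emat_entry_neg γ η (b+1) ha d2, mul_zero]


end Relations


end Aux

/-- If `η` is a strictly positive `γ`-eigenvector of the adjacency matrix
of the bipartite graph (`γ > 0`), then for `n ≥ 2` the elements `ê_0, …, ê_{n-2}` of `P_n`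
satisfy the Temperley–Lieb relations with parameter `γ`: `ê_j² = ê_j`; `ê_i ê_j = ê_j ê_i`
for `|i - j| ≥ 2`; and `ê_j ê_{j±1} ê_j = γ⁻² ê_j` whenever both indices lie in
`{0, …, n-2}`. -/
theorem ehat_temperley_lieb_relations
    {Γa Γb E : Type*} [Fintype Γa] [Fintype Γb] [Fintype E]
    (s : E → Γa) (t : E → Γb) (γ : ℝ) (hγ : 0 < γ)
    (η : Γa ⊕ Γb → ℝ) (hη : ∀ x, 0 < η x)
    (heig₁ : ∀ va : Γa,
      (∑ g : E, if s g = va then η (Sum.inr (t g)) else 0) = γ * η (Sum.inl va))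
    (heig₂ : ∀ vb : Γb,
      (∑ g : E, if t g = vb then η (Sum.inl (s g)) else 0) = γ * η (Sum.inr vb))
    (n : ℕ) (hn : 2 ≤ n) :
    (∀ (j : ℕ) (hj : j + 2 ≤ n),
      lmul (ehat s t γ η n j hj) (ehat s t γ η n j hj) = ehat s t γ η n j hj) ∧
    (∀ (i j : ℕ) (hi : i + 2 ≤ n) (hj : j + 2 ≤ n), i + 2 ≤ j ∨ j + 2 ≤ i →
      lmul (ehat s t γ η n i hi) (ehat s t γ η n j hj) =
        lmul (ehat s t γ η n j hj) (ehat s t γ η n i hi)) ∧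
    (∀ (j : ℕ) (hj : j + 3 ≤ n),
      lmul (ehat s t γ η n j (by omega))
          (lmul (ehat s t γ η n (j + 1) (by omega)) (ehat s t γ η n j (by omega))) =
        (((γ : ℂ)) ^ 2)⁻¹ • ehat s t γ η n j (by omega) ∧
      lmul (ehat s t γ η n (j + 1) (by omega))
          (lmul (ehat s t γ η n j (by omega)) (ehat s t γ η n (j + 1) (by omega))) =
        (((γ : ℂ)) ^ 2)⁻¹ • ehat s t γ η n (j + 1) (by omega)) := by
  refine ⟨?_, ?_, ?_⟩
  · intro j hj
    apply toMat_inj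
    rw [toMat_lmul, toMat_ehat γ η j hj]
    exact Emat_mul_self γ η hγ hη heig₁ heig₂ j hj
  · intro i j hi hj hd
    apply toMat_inj
    rw [toMat_lmul, toMat_lmul, toMat_ehat γ η i hi, toMat_ehat γ η j hj]
    exact Emat_comm γ η j i hj hi hd.symm
  · intro j hj
    constructor
    · apply toMat_inj
      rw [toMat_lmul, toMat_lmul, toMat_smul, toMat_ehat γ η j (by omega),
        toMat_ehat γ η (j+1) (by omega)]
      exact Emat_braid₁ γ η hγ hη j hj (by omega) (by omega)
    · apply toMat_inj
      rw [toMat_lmul, toMat_lmul, toMat_smul, toMat_ehat γ η j (by omega),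
        toMat_ehat γ η (j+1) (by omega)]
      exact Emat_braid₂ γ η hγ hη j hj (by omega) (by omega)

end
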